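/- Extraction of individual hopping terms: for distinct modes i, k, on the finite-excitation span, [a*_i a_i, [H, a*_k a_k]] = a*_i a_k + a_i a*_k, where H = ∑_{(j,l)∈I} (a*_j a_l + a_j a*_l) is a sum over edges of a graph I containing the edge (i,k), provided i and k are not both endpoints of any other edge summand contributing to this double commutator. -/
import Mathlib


/-! `M` bosonic modes on the finite-excitation span, modeled as finitely supported
functions on the number-basis index set `Fin M → ℕ`. -/

noncomputable section

/-- Finite-excitation span of `M` bosonic modes. -/
abbrev ModesSpan (M : ℕ) : Type := (Fin M → ℕ) →₀ ℂ

/-- Annihilation operator `a_j` on mode `j`. -/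
def ann (M : ℕ) (j : Fin M) : Module.End ℂ (ModesSpan M) :=
  Finsupp.lsum ℂ fun f =>
    (Real.sqrt (f j) : ℂ) • Finsupp.lsingle (Function.update f j (f j - 1))

/-- Creation operator `a*_j` on mode `j`. -/
def cre (M : ℕ) (j : Fin M) : Module.End ℂ (ModesSpan M) :=
  Finsupp.lsum ℂ fun f =>
    (Real.sqrt (f j + 1) : ℂ) • Finsupp.lsingle (Function.update f j (f j + 1))

/-- Number operator `a*_j a_j` on mode `j`. -/
def num (M : ℕ) (j : Fin M) : Module.End ℂ (ModesSpan M) := cre M j * ann M j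

/-- Hopping term `a*_j a_l + a_j a*_l` for an edge `e = (j,l)`. -/
def hop (M : ℕ) (e : Fin M × Fin M) : Module.End ℂ (ModesSpan M) :=
  cre M e.1 * ann M e.2 + ann M e.1 * cre M e.2


variable {M : ℕ}

lemma ann_single (j : Fin M) (f : Fin M → ℕ) (c : ℂ) :
    ann M j (Finsupp.single f c) =
      Finsupp.single (Function.update f j (f j - 1)) ((Real.sqrt (f j) : ℂ) * c) := by
  simp [ann, Finsupp.smul_single, smul_eq_mul]

lemma cre_single (j : Fin M) (f : Fin M → ℕ) (c : ℂ) :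
    cre M j (Finsupp.single f c) =
      Finsupp.single (Function.update f j (f j + 1)) ((Real.sqrt (f j + 1) : ℂ) * c) := by
  simp [cre, Finsupp.smul_single, smul_eq_mul]

lemma num_single (k : Fin M) (f : Fin M → ℕ) (c : ℂ) :
    num M k (Finsupp.single f c) = Finsupp.single f (((f k : ℂ)) * c) := by
  rw [num, Module.End.mul_apply, ann_single, cre_single]
  rcases h : f k with _ | n
  · simp [h]
  · rw [Function.update_idem, Function.update_self]
    have : n + 1 - 1 = n := rfl
    rw [this]
    have hupd : Function.update f k (n + 1) = f := by rw [← h]; exact Function.update_eq_self _ _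
    rw [hupd]
    congr 1
    push_cast
    rw [← mul_assoc, ← Complex.ofReal_mul, Real.mul_self_sqrt (by positivity)]
    push_cast
    ring

lemma end_lie_def (A B : Module.End ℂ (ModesSpan M)) : ⁅A, B⁆ = A * B - B * A := rfl

lemma lie_ann_num (j k : Fin M) : ⁅ann M j, num M k⁆ = if j = k then ann M j else 0 := by
  rw [end_lie_def]
  split_ifs with h
  · subst h
    apply Finsupp.lhom_ext
    intro f c
    simp only [LinearMap.sub_apply, Module.End.mul_apply, ann_single, num_single]
    rw [Function.update_self, ← Finsupp.single_sub]
    congr 1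
    rcases hf : f j with _ | n
    · simp [hf]
    · have : n + 1 - 1 = n := rfl
      rw [this]
      push_cast
      ring
  · apply Finsupp.lhom_ext
    intro f c
    simp only [LinearMap.sub_apply, Module.End.mul_apply, ann_single, num_single,
      LinearMap.zero_apply]
    rw [Function.update_of_ne (Ne.symm h)]
    rw [sub_eq_zero]
    ring_nf

lemma lie_cre_num (j k : Fin M) : ⁅cre M j, num M k⁆ = if j = k then -(cre M j) else 0 := by
  rw [end_lie_def]
  split_ifs with h
  · subst h
    apply Finsupp.lhom_ext
    intro f c
    simp only [LinearMap.sub_apply, Module.End.mul_apply, cre_single, num_single,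
      LinearMap.neg_apply]
    rw [Function.update_self, ← Finsupp.single_sub, ← Finsupp.single_neg]
    congr 1
    push_cast
    ring
  · apply Finsupp.lhom_ext
    intro f c
    simp only [LinearMap.sub_apply, Module.End.mul_apply, cre_single, num_single,
      LinearMap.zero_apply]
    rw [Function.update_of_ne (Ne.symm h)]
    rw [sub_eq_zero]
    ring_nf

section Generic
variable {R : Type*} [Ring R]
lemma g_neg (A B : R) : A * B - B * A = -(B * A - A * B) := by noncomm_ring
lemma g_mul_right (A B C : R) : A * (B * C) - B * C * A = (A * B - B * A) * C + B * (A * C - C * A) := by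
  noncomm_ring
lemma g_mul_left (A B C : R) : A * B * C - C * (A * B) = A * (B * C - C * B) + (A * C - C * A) * B := by
  noncomm_ring
lemma g_add (A B C : R) : A * (B + C) - (B + C) * A = (A * B - B * A) + (A * C - C * A) := by noncomm_ring
lemma g_add_lie (A B C : R) : (A + B) * C - C * (A + B) = (A * C - C * A) + (B * C - C * B) := by noncomm_ring
lemma g_sub (A B C : R) : A * (B - C) - (B - C) * A = (A * B - B * A) - (A * C - C * A) := by noncomm_ring
lemma g_zero (A : R) : A * 0 - 0 * A = 0 := by noncomm_ring
lemma g_zero_mul (A : R) : 0 * A = 0 := by noncomm_ring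
lemma g_mul_zero (A : R) : A * 0 = 0 := by noncomm_ring
lemma g_mul_neg (A B : R) : A * -B = -(A * B) := by noncomm_ring
lemma g_neg_mul (A B : R) : -A * B = -(A * B) := by noncomm_ring

lemma g_sum {α : Type*} (s : Finset α) (f : α → R) (C : R) :
    (∑ e ∈ s, f e) * C - C * (∑ e ∈ s, f e) = ∑ e ∈ s, (f e * C - C * f e) := by
  rw [Finset.sum_mul, Finset.mul_sum, Finset.sum_sub_distrib]
lemma g_sum' {α : Type*} (s : Finset α) (f : α → R) (C : R) :
    C * (∑ e ∈ s, f e) - (∑ e ∈ s, f e) * C = ∑ e ∈ s, (C * f e - f e * C) := by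
  rw [Finset.sum_mul, Finset.mul_sum, Finset.sum_sub_distrib]
end Generic

lemma end_lie_mul_right (A B C : Module.End ℂ (ModesSpan M)) :
    ⁅A, B * C⁆ = ⁅A, B⁆ * C + B * ⁅A, C⁆ := by
  simp only [end_lie_def]; exact g_mul_right A B C

lemma end_mul_lie (A B C : Module.End ℂ (ModesSpan M)) :
    ⁅A * B, C⁆ = A * ⁅B, C⁆ + ⁅A, C⁆ * B := by
  simp only [end_lie_def]; exact g_mul_left A B C

lemma end_add_lie (A B C : Module.End ℂ (ModesSpan M)) :
    ⁅A + B, C⁆ = ⁅A, C⁆ + ⁅B, C⁆ := by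
  simp only [end_lie_def]; exact g_add_lie A B C

lemma end_lie_sub (A B C : Module.End ℂ (ModesSpan M)) :
    ⁅A, B - C⁆ = ⁅A, B⁆ - ⁅A, C⁆ := by
  simp only [end_lie_def]; exact g_sub A B C

lemma end_lie_zero (A : Module.End ℂ (ModesSpan M)) : ⁅A, (0 : Module.End ℂ (ModesSpan M))⁆ = 0 := by
  simp only [end_lie_def]; exact g_zero A

lemma end_sum_lie {α : Type*} (s : Finset α) (f : α → Module.End ℂ (ModesSpan M))
    (C : Module.End ℂ (ModesSpan M)) : ⁅∑ e ∈ s, f e, C⁆ = ∑ e ∈ s, ⁅f e, C⁆ := by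
  simp only [end_lie_def]; exact g_sum s f C

lemma end_lie_sum {α : Type*} (s : Finset α) (f : α → Module.End ℂ (ModesSpan M))
    (C : Module.End ℂ (ModesSpan M)) : ⁅C, ∑ e ∈ s, f e⁆ = ∑ e ∈ s, ⁅C, f e⁆ := by
  simp only [end_lie_def]; exact g_sum' s f C

lemma e_zero_mul (A : Module.End ℂ (ModesSpan M)) : (0 : Module.End ℂ (ModesSpan M)) * A = 0 :=
  g_zero_mul A
lemma e_mul_zero (A : Module.End ℂ (ModesSpan M)) : A * (0 : Module.End ℂ (ModesSpan M)) = 0 :=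
  g_mul_zero A
lemma e_mul_neg (A B : Module.End ℂ (ModesSpan M)) : A * (-B) = -(A * B) := g_mul_neg A B
lemma e_neg_mul (A B : Module.End ℂ (ModesSpan M)) : (-A) * B = -(A * B) := g_neg_mul A B
lemma e_neg_zero : -(0 : Module.End ℂ (ModesSpan M)) = 0 := by abel
lemma e_neg_neg (A : Module.End ℂ (ModesSpan M)) : - -A = A := by abel

lemma lie_num_ann_self (i : Fin M) : ⁅num M i, ann M i⁆ = -(ann M i) := by
  have h : ⁅num M i, ann M i⁆ = -⁅ann M i, num M i⁆ := by
    simp only [end_lie_def]; exact g_neg (num M i) _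
  rw [h, lie_ann_num, if_pos rfl]

lemma lie_num_ann_ne {i j : Fin M} (h : j ≠ i) : ⁅num M i, ann M j⁆ = 0 := by
  have h' : ⁅num M i, ann M j⁆ = -⁅ann M j, num M i⁆ := by
    simp only [end_lie_def]; exact g_neg (num M i) _
  rw [h', lie_ann_num, if_neg h, e_neg_zero]

lemma lie_num_cre_self (i : Fin M) : ⁅num M i, cre M i⁆ = cre M i := by
  have h : ⁅num M i, cre M i⁆ = -⁅cre M i, num M i⁆ := by
    simp only [end_lie_def]; exact g_neg (num M i) _
  rw [h, lie_cre_num, if_pos rfl, e_neg_neg]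

lemma lie_num_cre_ne {i j : Fin M} (h : j ≠ i) : ⁅num M i, cre M j⁆ = 0 := by
  have h' : ⁅num M i, cre M j⁆ = -⁅cre M j, num M i⁆ := by
    simp only [end_lie_def]; exact g_neg (num M i) _
  rw [h', lie_cre_num, if_neg h, e_neg_zero]

lemma lie_hop_num (j l k : Fin M) :
    ⁅hop M (j, l), num M k⁆ =
      cre M j * (if l = k then ann M l else 0) + (if j = k then -(cre M j) else 0) * ann M l
        + (ann M j * (if l = k then -(cre M l) else 0) + (if j = k then ann M j else 0) * cre M l) := by
  rw [hop]
  rw [end_add_lie, end_mul_lie, end_mul_lie, lie_ann_num, lie_cre_num, lie_cre_num, lie_ann_num]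

/-- Extraction of individual hopping terms: for distinct modes `i, k` and
`H = ∑_{(j,l) ∈ I} (a*_j a_l + a_j a*_l)` with `(i,k) ∈ I` and no other edge of `I`
having both `i` and `k` as endpoints, one has
`[a*_i a_i, [H, a*_k a_k]] = a*_i a_k + a_i a*_k` on the finite-excitation span. -/
theorem stmt10 (M : ℕ) (I : Finset (Fin M × Fin M)) (i k : Fin M) (hik : i ≠ k)
    (hmem : (i, k) ∈ I)
    (hedge : ∀ e ∈ I, e ≠ (i, k) → ¬((e.1 = i ∧ e.2 = k) ∨ (e.1 = k ∧ e.2 = i))) :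
    ⁅num M i, ⁅∑ e ∈ I, hop M e, num M k⁆⁆ =
      cre M i * ann M k + ann M i * cre M k := by
  rw [end_sum_lie, end_lie_sum, Finset.sum_eq_single_of_mem (i, k) hmem]
  · rw [lie_hop_num, if_pos rfl, if_pos rfl, if_neg hik, if_neg hik]
    have h1 : cre M i * ann M k + 0 * ann M k + (ann M i * -(cre M k) + 0 * cre M k)
        = cre M i * ann M k - ann M i * cre M k := by
      rw [e_zero_mul, e_zero_mul, e_mul_neg]; abel
    rw [h1, end_lie_sub, end_lie_mul_right, end_lie_mul_right,
      lie_num_cre_self, lie_num_ann_ne hik.symm, lie_num_ann_self, lie_num_cre_ne hik.symm,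
      e_mul_zero, e_mul_zero, e_neg_mul]
    abel
  · intro e he hne
    obtain ⟨j, l⟩ := e
    have h := hedge (j, l) he hne
    rw [lie_hop_num]
    by_cases hl : l = k <;> by_cases hj : j = k
    · -- j = k, l = k
      rw [if_pos hl, if_pos hl, if_pos hj, if_pos hj]
      have h0 : cre M j * ann M l + -(cre M j) * ann M l + (ann M j * -(cre M l) + ann M j * cre M l)
          = (0 : Module.End ℂ (ModesSpan M)) := by
        rw [e_neg_mul, e_mul_neg]; abel
      rw [h0, end_lie_zero]
    · -- l = k, j ≠ k
      have hji : j ≠ i := fun h' => hne (by rw [h', hl])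
      have hli : l ≠ i := by rw [hl]; exact hik.symm
      rw [if_pos hl, if_pos hl, if_neg hj, if_neg hj]
      have h1 : cre M j * ann M l + 0 * ann M l + (ann M j * -(cre M l) + 0 * cre M l)
          = cre M j * ann M l - ann M j * cre M l := by
        rw [e_zero_mul, e_zero_mul, e_mul_neg]; abel
      rw [h1, end_lie_sub, end_lie_mul_right, end_lie_mul_right,
        lie_num_cre_ne hji, lie_num_ann_ne hli, lie_num_ann_ne hji, lie_num_cre_ne hli,
        e_zero_mul, e_zero_mul, e_mul_zero, e_mul_zero]
      abel
    · -- j = k, l ≠ k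
      have hli : l ≠ i := fun h' => h (Or.inr ⟨hj, h'⟩)
      have hji : j ≠ i := by rw [hj]; exact hik.symm
      rw [if_neg hl, if_neg hl, if_pos hj, if_pos hj]
      have h1 : cre M j * 0 + -(cre M j) * ann M l + (ann M j * 0 + ann M j * cre M l)
          = ann M j * cre M l - cre M j * ann M l := by
        rw [e_mul_zero, e_mul_zero, e_neg_mul]; abel
      rw [h1, end_lie_sub, end_lie_mul_right, end_lie_mul_right,
        lie_num_ann_ne hji, lie_num_cre_ne hli, lie_num_cre_ne hji, lie_num_ann_ne hli,
        e_zero_mul, e_zero_mul, e_mul_zero, e_mul_zero]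
      abel
    · -- l ≠ k, j ≠ k
      rw [if_neg hl, if_neg hl, if_neg hj, if_neg hj]
      have h0 : cre M j * 0 + 0 * ann M l + (ann M j * 0 + 0 * cre M l)
          = (0 : Module.End ℂ (ModesSpan M)) := by
        rw [e_mul_zero, e_mul_zero, e_zero_mul, e_zero_mul]; abel
      rw [h0, end_lie_zero]
end
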